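/- arXiv:0805.0826 — 7 statements merged into one kernel-verified Lean document; each statement's English description precedes it below -/
import Mathlib

section
/- Let s > 0 and let P satisfy H1. Fix x₀ > 0 and suppose the integral ∫_{x₀}^∞ P(z)·z^{−1−2/s} dz is finite. Then for every ε > 0, setting γ₀ = x₀^{1/s} · ( (2/s)·∫_{x₀}^∞ P(z)·z^{−1−2/s} dz + ε² )^{1/2}, there exists a positive solution γ of the Dyson–Schwinger ODE on [x₀, ∞) with γ(x₀) = γ₀. In particular, positive global solutions exist. -/
open Real MeasureTheory Filter Set

noncomputable section

/-- `γ` is a positive solution of the Dyson–Schwinger ODE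
`γ'(x) = (γ(x) + γ(x)² − P(x)) / (s·x·γ(x))` on the set `I`. -/
def IsDSSolution (s : ℝ) (P γ : ℝ → ℝ) (I : Set ℝ) : Prop :=
  (∀ x ∈ I, 0 < γ x) ∧
    ∀ x ∈ I, HasDerivWithinAt γ ((γ x + (γ x) ^ 2 - P x) / (s * x * γ x)) I x

/-- Hypothesis H1: `P` is twice continuously differentiable on `[0,∞)`,
`P 0 = 0`, and `P x > 0` for `x > 0`. -/
def H1 (P : ℝ → ℝ) : Prop :=
  ContDiffOn ℝ 2 P (Set.Ici 0) ∧ P 0 = 0 ∧ ∀ x > (0 : ℝ), 0 < P x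

/-- Hypothesis H2: `P` is strictly increasing on `[0,∞)`. -/
def H2 (P : ℝ → ℝ) : Prop := StrictMonoOn P (Set.Ici 0)

/-- The nullcline `γ_c(x) = (√(1 + 4 P x) − 1)/2`. -/
def gammaC (P : ℝ → ℝ) (x : ℝ) : ℝ := (Real.sqrt (1 + 4 * P x) - 1) / 2

/-!
Writing `γ = x ^ (1/s) * √h` turns the Dyson–Schwinger equation into
`h' = 2/s * (√h * x^(-1-1/s) - P x / x^(1+2/s))`. With `√h` replaced by `√(max h ε²)` the right
side is Lipschitz in `h` with constant `x^(-1-1/s)/(s ε)`, which is integrable on `[x₀, ∞)`; so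
the Picard map on bounded continuous functions has a contracting iterate (its `n`-th iterate is
`Λⁿ/n!`-Lipschitz, `Λ` the integral of the constant) and a global solution exists. Starting from
`h x₀ = 2/s * ∫_{x₀}^∞ P z / z^(1+2/s) + ε²` and dropping the nonnegative square-root term gives
`h ≥ ε²` on `[x₀, ∞)`, so the truncation is never active and `γ` solves the original equation.
-/

section HalfLine

variable {x₀ x : ℝ}

theorem ContinuousOn.hasDerivWithinAt_integral_Ici {f : ℝ → ℝ} (hf : ContinuousOn f (Ici x₀))
    (hx : x ∈ Ici x₀) :
    HasDerivWithinAt (fun y => ∫ z in x₀..y, f z) (f x) (Ici x₀) x := by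
  have hf' : Continuous fun z => f (max z x₀) :=
    hf.comp_continuous (continuous_id.max continuous_const) fun z => le_max_right z x₀
  have key := (hf'.integral_hasStrictDerivAt x₀ x).hasDerivAt.hasDerivWithinAt (s := Ici x₀)
  rw [max_eq_left (mem_Ici.1 hx)] at key
  refine key.congr (fun y hy => intervalIntegral.integral_congr fun z hz => ?_) ?_
  · rw [uIcc_of_le (mem_Ici.1 hy)] at hz
    simp [max_eq_left hz.1]
  · exact intervalIntegral.integral_congr fun z hz => by
      rw [uIcc_of_le (mem_Ici.1 hx)] at hz
      simp [max_eq_left hz.1]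

theorem ContinuousOn.continuousOn_primitive_Ici {f : ℝ → ℝ} (hf : ContinuousOn f (Ici x₀)) :
    ContinuousOn (fun y => ∫ z in x₀..y, f z) (Ici x₀) := fun _ hx =>
  (hf.hasDerivWithinAt_integral_Ici hx).continuousWithinAt

theorem ContinuousOn.intervalIntegrable_of_Ici {f : ℝ → ℝ} (hf : ContinuousOn f (Ici x₀))
    (hx : x₀ ≤ x) : IntervalIntegrable f volume x₀ x :=
  (hf.mono (by rw [uIcc_of_le hx]; exact Icc_subset_Ici_self)).intervalIntegrable

theorem intervalIntegral_le_setIntegral_Ici {f : ℝ → ℝ} (hf : IntegrableOn f (Ici x₀))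
    (hf0 : ∀ z ∈ Ici x₀, 0 ≤ f z) (hx : x₀ ≤ x) :
    ∫ z in x₀..x, f z ≤ ∫ z in Ici x₀, f z := by
  rw [intervalIntegral.integral_of_le hx]
  exact setIntegral_mono_set hf ((ae_restrict_iff' measurableSet_Ici).2 (ae_of_all _ hf0))
    (Ioc_subset_Icc_self.trans Icc_subset_Ici_self).eventuallyLE

theorem abs_intervalIntegral_le_setIntegral_Ici {f : ℝ → ℝ} (hf : IntegrableOn f (Ici x₀))
    (hx : x₀ ≤ x) : |∫ z in x₀..x, f z| ≤ ∫ z in Ici x₀, |f z| :=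
  (intervalIntegral.abs_integral_le_integral_abs hx).trans
    (intervalIntegral_le_setIntegral_Ici hf.abs (fun _ _ => abs_nonneg _) hx)

theorem integral_pow_primitive_mul {L : ℝ → ℝ} (hL : ContinuousOn L (Ici x₀)) (n : ℕ)
    (hx : x₀ ≤ x) :
    ∫ z in x₀..x, (∫ t in x₀..z, L t) ^ n * L z = (∫ t in x₀..x, L t) ^ (n + 1) / (n + 1) := by
  have hΛ : ∀ z ∈ Ici x₀, HasDerivWithinAt (fun y => ∫ t in x₀..y, L t) (L z) (Ici x₀) z :=
    fun z hz => hL.hasDerivWithinAt_integral_Ici hz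
  have hderiv : ∀ z ∈ Ioo x₀ x, HasDerivWithinAt
      (fun y => (∫ t in x₀..y, L t) ^ (n + 1) / (n + 1)) ((∫ t in x₀..z, L t) ^ n * L z)
      (Ioi z) z := fun z hz =>
    (((hΛ z (mem_Ici.2 hz.1.le)).pow (n + 1)).div_const ((n : ℝ) + 1)).mono
      (fun t ht => hz.1.le.trans (le_of_lt ht)) |>.congr_deriv (by push_cast; field_simp)
  have hcont : ContinuousOn (fun z => (∫ t in x₀..z, L t) ^ n * L z) (Ici x₀) :=
    (hL.continuousOn_primitive_Ici.pow n).mul hL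
  rw [intervalIntegral.integral_eq_sub_of_hasDeriv_right_of_le hx
    (fun z hz => (((hΛ z hz.1).pow (n + 1)).div_const _).continuousWithinAt.mono
      Icc_subset_Ici_self) hderiv (hcont.intervalIntegrable_of_Ici hx)]
  simp

end HalfLine

structure IntegrableLipschitzField (F : ℝ → ℝ → ℝ) (L : ℝ → ℝ) (x₀ : ℝ) : Prop where
  continuousOn : ContinuousOn (Function.uncurry F) (Ici x₀ ×ˢ univ)
  continuousOn_lip : ContinuousOn L (Ici x₀)
  integrableOn_lip : IntegrableOn L (Ici x₀)
  integrableOn_zero : IntegrableOn (fun z => F z 0) (Ici x₀)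
  abs_sub_le : ∀ z ∈ Ici x₀, ∀ a b, |F z a - F z b| ≤ L z * |a - b|

/-- Freezing the upper limit at `x₀` makes `picardStep F x₀ c g` constant on `(-∞, x₀]`, so that
the Picard map acts on bounded continuous functions on all of `ℝ`. -/
def picardStep (F : ℝ → ℝ → ℝ) (x₀ c : ℝ) (g : ℝ → ℝ) (x : ℝ) : ℝ :=
  c + ∫ z in x₀..max x x₀, F z (g z)

namespace IntegrableLipschitzField

variable {F : ℝ → ℝ → ℝ} {L : ℝ → ℝ} {x₀ x c : ℝ} {g g₁ g₂ : ℝ → ℝ}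

theorem lip_nonneg (H : IntegrableLipschitzField F L x₀) {z : ℝ} (hz : z ∈ Ici x₀) :
    0 ≤ L z := by
  simpa using (abs_nonneg _).trans (H.abs_sub_le z hz 1 0)

theorem continuousOn_comp (H : IntegrableLipschitzField F L x₀) (hg : Continuous g) :
    ContinuousOn (fun z => F z (g z)) (Ici x₀) :=
  H.continuousOn.comp (continuousOn_id.prodMk hg.continuousOn) fun _ hz => ⟨hz, trivial⟩

theorem integrableOn_comp (H : IntegrableLipschitzField F L x₀) (hg : Continuous g) {M : ℝ}
    (hM : ∀ z, |g z| ≤ M) : IntegrableOn (fun z => F z (g z)) (Ici x₀) := by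
  refine Integrable.mono' (H.integrableOn_zero.abs.add (H.integrableOn_lip.mul_const M))
    ((H.continuousOn_comp hg).aestronglyMeasurable measurableSet_Ici)
    ((ae_restrict_iff' measurableSet_Ici).2 (ae_of_all _ fun z hz => ?_))
  have hlip : |F z (g z) - F z 0| ≤ L z * |g z - 0| := H.abs_sub_le z hz (g z) 0
  have hLM : L z * |g z| ≤ L z * M := mul_le_mul_of_nonneg_left (hM z) (H.lip_nonneg hz)
  rw [sub_zero] at hlip
  simp only [Pi.add_apply, Real.norm_eq_abs]
  linarith [abs_sub_abs_le_abs_sub (F z (g z)) (F z 0)]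

theorem picardStep_of_ge (hx : x₀ ≤ x) :
    picardStep F x₀ c g x = c + ∫ z in x₀..x, F z (g z) := by
  simp [picardStep, max_eq_left hx]

theorem continuous_picardStep (H : IntegrableLipschitzField F L x₀) (hg : Continuous g) :
    Continuous (picardStep F x₀ c g) := by
  exact continuous_const.add <|
    (H.continuousOn_comp hg).continuousOn_primitive_Ici.comp_continuous (continuous_id.max continuous_const) fun x => le_max_right x x₀

theorem abs_picardStep_sub_le (H : IntegrableLipschitzField F L x₀) (hg₁ : Continuous g₁)
    (hg₂ : Continuous g₂) (x : ℝ) :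
    |picardStep F x₀ c g₁ x - picardStep F x₀ c g₂ x| ≤
      ∫ z in x₀..max x x₀, L z * |g₁ z - g₂ z| := by
  have hx : x₀ ≤ max x x₀ := le_max_right x x₀
  have hint := fun {g : ℝ → ℝ} (hg : Continuous g) =>
    (H.continuousOn_comp hg).intervalIntegrable_of_Ici hx
  rw [picardStep, picardStep, add_sub_add_left_eq_sub,
    ← intervalIntegral.integral_sub (hint hg₁) (hint hg₂)]
  refine (intervalIntegral.abs_integral_le_integral_abs hx).trans <|
    intervalIntegral.integral_mono_on hx ((hint hg₁).sub (hint hg₂)).abs ?_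
      fun z hz => H.abs_sub_le z hz.1 _ _
  exact (H.continuousOn_lip.mul ((hg₁.sub hg₂).abs.continuousOn)).intervalIntegrable_of_Ici hx

def picardMap (H : IntegrableLipschitzField F L x₀) (c : ℝ) :
    BoundedContinuousFunction ℝ ℝ → BoundedContinuousFunction ℝ ℝ := fun g =>
  BoundedContinuousFunction.ofNormedAddCommGroup (picardStep F x₀ c g)
    (H.continuous_picardStep g.continuous) (|c| + ∫ z in Ici x₀, |F z (g z)|) fun x => by
      have hg := H.integrableOn_comp g.continuous fun z => (Real.norm_eq_abs _).symm.trans_le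
        (g.norm_coe_le_norm z)
      exact (norm_add_le _ _).trans (add_le_add le_rfl
        (abs_intervalIntegral_le_setIntegral_Ici hg (le_max_right x x₀)))

theorem picardMap_apply (H : IntegrableLipschitzField F L x₀) (g : BoundedContinuousFunction ℝ ℝ)
    (x : ℝ) : H.picardMap c g x = picardStep F x₀ c g x := rfl

theorem abs_iterate_picardMap_sub_le (H : IntegrableLipschitzField F L x₀) (n : ℕ)
    (g₁ g₂ : BoundedContinuousFunction ℝ ℝ) (x : ℝ) :
    |(H.picardMap c)^[n] g₁ x - (H.picardMap c)^[n] g₂ x| ≤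
      (∫ z in x₀..max x x₀, L z) ^ n / n.factorial * dist g₁ g₂ := by
  induction n generalizing x with
  | zero => simpa [← Real.dist_eq] using BoundedContinuousFunction.dist_coe_le_dist x
  | succ n ih =>
    have hx : x₀ ≤ max x x₀ := le_max_right x x₀
    set u₁ := (H.picardMap c)^[n] g₁
    set u₂ := (H.picardMap c)^[n] g₂
    have hcont : ContinuousOn (fun z => (∫ t in x₀..z, L t) ^ n * L z) (Ici x₀) :=
      (H.continuousOn_lip.continuousOn_primitive_Ici.pow n).mul H.continuousOn_lip
    rw [Function.iterate_succ_apply', Function.iterate_succ_apply', picardMap_apply,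
      picardMap_apply]
    calc _ ≤ ∫ z in x₀..max x x₀, L z * |u₁ z - u₂ z| :=
          H.abs_picardStep_sub_le u₁.continuous u₂.continuous x
      _ ≤ ∫ z in x₀..max x x₀, dist g₁ g₂ / n.factorial * ((∫ t in x₀..z, L t) ^ n * L z) := by
          refine intervalIntegral.integral_mono_on hx
            ((H.continuousOn_lip.mul (u₁.continuous.sub u₂.continuous).abs.continuousOn
              ).intervalIntegrable_of_Ici hx)
            ((continuousOn_const.mul hcont).intervalIntegrable_of_Ici hx) fun z hz => ?_
          have hbound := mul_le_mul_of_nonneg_left (ih z) (H.lip_nonneg hz.1)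
          rw [max_eq_left hz.1] at hbound
          exact hbound.trans_eq (by ring)
      _ = _ := by
          rw [intervalIntegral.integral_const_mul,
            integral_pow_primitive_mul H.continuousOn_lip n hx, Nat.factorial_succ]
          push_cast
          field_simp

theorem dist_iterate_picardMap_le (H : IntegrableLipschitzField F L x₀) (n : ℕ)
    (g₁ g₂ : BoundedContinuousFunction ℝ ℝ) :
    dist ((H.picardMap c)^[n] g₁) ((H.picardMap c)^[n] g₂) ≤
      (∫ z in Ici x₀, L z) ^ n / n.factorial * dist g₁ g₂ := by
  have hΛ : 0 ≤ ∫ z in Ici x₀, L z := setIntegral_nonneg measurableSet_Ici fun _ => H.lip_nonneg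
  refine (BoundedContinuousFunction.dist_le (by positivity)).2 fun x => ?_
  have hx : x₀ ≤ max x x₀ := le_max_right x x₀
  refine (H.abs_iterate_picardMap_sub_le n g₁ g₂ x).trans ?_
  gcongr
  · exact intervalIntegral.integral_nonneg hx fun z hz => H.lip_nonneg hz.1
  · exact intervalIntegral_le_setIntegral_Ici H.integrableOn_lip (fun _ => H.lip_nonneg) hx

theorem exists_isFixedPt_picardMap (H : IntegrableLipschitzField F L x₀) (c : ℝ) :
    ∃ h, Function.IsFixedPt (H.picardMap c) h := by
  have hΛ : 0 ≤ ∫ z in Ici x₀, L z := setIntegral_nonneg measurableSet_Ici fun _ => H.lip_nonneg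
  obtain ⟨n, hn⟩ := ((FloorSemiring.tendsto_pow_div_factorial_atTop (∫ z in Ici x₀, L z)).eventually
    (gt_mem_nhds one_pos)).exists
  have hcontr : ContractingWith ⟨(∫ z in Ici x₀, L z) ^ n / n.factorial, by positivity⟩
      (H.picardMap c)^[n] :=
    ⟨hn, LipschitzWith.of_dist_le_mul (H.dist_iterate_picardMap_le n)⟩
  exact ⟨_, hcontr.isFixedPt_fixedPoint_iterate⟩

theorem exists_eq_add_integral (H : IntegrableLipschitzField F L x₀) (c : ℝ) :
    ∃ h : ℝ → ℝ, Continuous h ∧ (∀ x ∈ Ici x₀, h x = c + ∫ z in x₀..x, F z (h z)) ∧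
      ∀ x ∈ Ici x₀, HasDerivWithinAt h (F x (h x)) (Ici x₀) x := by
  obtain ⟨h, hfix⟩ := H.exists_isFixedPt_picardMap c
  have heq : ∀ x ∈ Ici x₀, h x = c + ∫ z in x₀..x, F z (h z) := fun x hx => by
    rw [← hfix, picardMap_apply, picardStep_of_ge hx, hfix]
  refine ⟨h, h.continuous, heq, fun x hx => ?_⟩
  exact (((H.continuousOn_comp h.continuous).hasDerivWithinAt_integral_Ici hx).const_add c).congr
    heq (heq x hx)

end IntegrableLipschitzField

theorem abs_sqrt_sub_sqrt_le {ε u v : ℝ} (hε : 0 < ε) (hu : ε ^ 2 ≤ u) (hv : ε ^ 2 ≤ v) :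
    |√u - √v| ≤ |u - v| / (2 * ε) := by
  have hεu : ε ≤ √u := Real.le_sqrt_of_sq_le hu
  have hεv : ε ≤ √v := Real.le_sqrt_of_sq_le hv
  rw [le_div_iff₀ (by positivity)]
  calc |√u - √v| * (2 * ε) ≤ |√u - √v| * |√u + √v| := by
        rw [abs_of_pos (show 0 < √u + √v by linarith)]; gcongr; linarith
    _ = |u - v| := by
        rw [← abs_mul, show (√u - √v) * (√u + √v) = √u ^ 2 - √v ^ 2 by ring,
          sq_sqrt (by nlinarith), sq_sqrt (by nlinarith)]

theorem isDSSolution_rpow_mul_sqrt {s : ℝ} {P h : ℝ → ℝ} {I : Set ℝ} (hI : I ⊆ Ioi 0)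
    (hpos : ∀ x ∈ I, 0 < h x)
    (hh : ∀ x ∈ I, HasDerivWithinAt h
      (2 / s * (√(h x) * x ^ (-1 - 1 / s) - P x / x ^ (1 + 2 / s))) I x) :
    IsDSSolution s P (fun x => x ^ (1 / s) * √(h x)) I := by
  refine ⟨fun x hx => mul_pos (rpow_pos_of_pos (hI hx) _) (sqrt_pos.2 (hpos x hx)), fun x hx => ?_⟩
  have hx0 : 0 < x := hI hx
  have hhx := hpos x hx
  refine ((hasDerivAt_rpow_const (p := 1 / s) (Or.inl hx0.ne')).hasDerivWithinAt.mul
    ((hasDerivAt_sqrt hhx.ne').comp_hasDerivWithinAt x (hh x hx))).congr_deriv ?_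
  dsimp only [Function.comp_apply]
  set a := x ^ (1 / s) with ha
  set b := √(h x)
  have hapos : 0 < a := rpow_pos_of_pos hx0 _
  have hb : 0 < b := sqrt_pos.2 hhx
  have e1 : x ^ (1 / s - 1) = a / x := by rw [ha, rpow_sub hx0, rpow_one]
  have e2 : x ^ (-1 - 1 / s) = (x * a)⁻¹ := by
    rw [show (-1 - 1 / s : ℝ) = -(1 + 1 / s) by ring, rpow_neg hx0.le, rpow_add hx0, rpow_one]
  have e3 : x ^ (1 + 2 / s) = x * a ^ 2 := by
    rw [rpow_add hx0, rpow_one, ha, ← rpow_natCast, ← rpow_mul hx0.le]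
    ring_nf
  rw [e1, e2, e3]
  field_simp
  ring

def dsReducedField (s ε : ℝ) (P : ℝ → ℝ) (z a : ℝ) : ℝ :=
  2 / s * (√(max a (ε ^ 2)) * z ^ (-1 - 1 / s) - P z / z ^ (1 + 2 / s))

section DSReducedField

variable {s ε x₀ : ℝ} {P : ℝ → ℝ}

theorem neg_le_dsReducedField (hs : 0 < s) {z : ℝ} (hz : 0 ≤ z) (a : ℝ) :
    -(2 / s * (P z / z ^ (1 + 2 / s))) ≤ dsReducedField s ε P z a := by
  have : 0 ≤ √(max a (ε ^ 2)) * z ^ (-1 - 1 / s) := by positivity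
  rw [dsReducedField]
  nlinarith [div_pos two_pos hs]

theorem integrableLipschitzField_dsReducedField (hs : 0 < s) (hε : 0 < ε) (hx₀ : 0 < x₀)
    (hPc : ContinuousOn P (Ici x₀))
    (hInt : IntegrableOn (fun z => P z / z ^ (1 + 2 / s)) (Ici x₀)) :
    IntegrableLipschitzField (dsReducedField s ε P) (fun z => z ^ (-1 - 1 / s) / (s * ε)) x₀ := by
  have hw : IntegrableOn (fun z : ℝ => z ^ (-1 - 1 / s)) (Ici x₀) :=
    (integrableOn_Ici_iff_integrableOn_Ioi).2 <|
      integrableOn_Ioi_rpow_of_lt (by linarith [one_div_pos.2 hs]) hx₀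
  have hwc : ContinuousOn (fun z : ℝ => z ^ (-1 - 1 / s)) (Ici x₀) :=
    fun z hz => (continuousAt_rpow_const z _ (Or.inl (hx₀.trans_le hz).ne')).continuousWithinAt
  have hPfn : ContinuousOn (fun z => P z / z ^ (1 + 2 / s)) (Ici x₀) :=
    hPc.div (continuous_rpow_const (by positivity)).continuousOn
      fun z hz => (rpow_pos_of_pos (hx₀.trans_le hz) _).ne'
  have hfst : MapsTo Prod.fst (Ici x₀ ×ˢ (univ : Set ℝ)) (Ici x₀) := fun p hp => hp.1
  refine ⟨?_, hwc.div_const _, hw.div_const _, ?_, fun z hz a b => ?_⟩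
  · exact continuousOn_const.mul <|
      ((continuous_sqrt.comp (continuous_snd.max continuous_const)).continuousOn.mul
        (hwc.comp continuousOn_fst hfst)).sub (hPfn.comp continuousOn_fst hfst)
  · refine IntegrableOn.congr_fun (((hw.const_mul √(ε ^ 2)).sub hInt).const_mul (2 / s))
      (fun z _ => ?_) measurableSet_Ici
    simp [dsReducedField, max_eq_right (sq_nonneg ε)]
  · have hwz : 0 ≤ z ^ (-1 - 1 / s) := rpow_nonneg (hx₀.le.trans hz) _
    calc |dsReducedField s ε P z a - dsReducedField s ε P z b|
        = 2 / s * z ^ (-1 - 1 / s) * |√(max a (ε ^ 2)) - √(max b (ε ^ 2))| := by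
          rw [dsReducedField, dsReducedField, ← mul_sub, sub_sub_sub_cancel_right, ← sub_mul,
            abs_mul, abs_mul, abs_of_pos (by positivity), abs_of_nonneg hwz]
          ring
      _ ≤ 2 / s * z ^ (-1 - 1 / s) * (|max a (ε ^ 2) - max b (ε ^ 2)| / (2 * ε)) := by
          gcongr
          exact abs_sqrt_sub_sqrt_le hε (le_max_right _ _) (le_max_right _ _)
      _ ≤ 2 / s * z ^ (-1 - 1 / s) * (|a - b| / (2 * ε)) := by
          gcongr ?_ * (?_ / _)
          exact abs_max_sub_max_le_abs _ _ _
      _ = z ^ (-1 - 1 / s) / (s * ε) * |a - b| := by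
          field_simp

theorem exists_isDSSolution_of_integrableOn (hs : 0 < s) (hε : 0 < ε) (hx₀ : 0 < x₀)
    (hPc : ContinuousOn P (Ici x₀)) (hPnn : ∀ z ∈ Ici x₀, 0 ≤ P z)
    (hInt : IntegrableOn (fun z => P z / z ^ (1 + 2 / s)) (Ici x₀)) :
    ∃ γ : ℝ → ℝ, IsDSSolution s P γ (Ici x₀) ∧
      γ x₀ = x₀ ^ (1 / s) * √(2 / s * (∫ z in Ici x₀, P z / z ^ (1 + 2 / s)) + ε ^ 2) := by
  set c := 2 / s * (∫ z in Ici x₀, P z / z ^ (1 + 2 / s)) + ε ^ 2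
  have H := integrableLipschitzField_dsReducedField hs hε hx₀ hPc hInt
  obtain ⟨h, hcont, heq, hderiv⟩ := H.exists_eq_add_integral c
  have hPfn_nonneg : ∀ z ∈ Ici x₀, 0 ≤ P z / z ^ (1 + 2 / s) := fun z hz =>
    div_nonneg (hPnn z hz) (rpow_nonneg (hx₀.le.trans hz) _)
  have hlow : ∀ x ∈ Ici x₀, ε ^ 2 ≤ h x := fun x hx => by
    have hx' : x₀ ≤ x := hx
    have hPfn_le := intervalIntegral_le_setIntegral_Ici hInt hPfn_nonneg hx'
    have hint : -(2 / s * ∫ z in x₀..x, P z / z ^ (1 + 2 / s)) ≤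
        ∫ z in x₀..x, dsReducedField s ε P z (h z) := by
      rw [← intervalIntegral.integral_const_mul, ← intervalIntegral.integral_neg]
      refine intervalIntegral.integral_mono_on hx' ?_ ?_ fun z hz =>
        neg_le_dsReducedField hs (hx₀.le.trans hz.1) _
      · exact ((hInt.mono_set (by rw [uIcc_of_le hx']; exact Icc_subset_Ici_self)
          ).intervalIntegrable.const_mul _).neg
      · exact (H.continuousOn_comp hcont).intervalIntegrable_of_Ici hx'
    rw [heq x hx]
    nlinarith [div_pos two_pos hs]
  refine ⟨_, isDSSolution_rpow_mul_sqrt (fun x hx => hx₀.trans_le hx)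
    (fun x hx => (pow_pos hε 2).trans_le (hlow x hx)) fun x hx => ?_, ?_⟩
  · simpa [dsReducedField, max_eq_left (hlow x hx)] using hderiv x hx
  · rw [heq x₀ (mem_Ici.2 le_rfl), intervalIntegral.integral_same, add_zero]

end DSReducedField

theorem stmt_0 (s : ℝ) (hs : 0 < s) (P : ℝ → ℝ) (hP : H1 P) (x₀ : ℝ) (hx₀ : 0 < x₀)
    (hInt : MeasureTheory.IntegrableOn (fun z => P z / z ^ (1 + 2 / s)) (Set.Ici x₀)) :
    (∀ ε > (0 : ℝ), ∃ γ : ℝ → ℝ,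
        IsDSSolution s P γ (Set.Ici x₀) ∧
        γ x₀ = x₀ ^ (1 / s) *
          Real.sqrt (2 / s * (∫ z in Set.Ici x₀, P z / z ^ (1 + 2 / s)) + ε ^ 2)) ∧
    ∃ γ : ℝ → ℝ, IsDSSolution s P γ (Set.Ici x₀) := by
  obtain ⟨hPc, -, hPpos⟩ := hP
  have hsol := fun ε (hε : 0 < ε) => exists_isDSSolution_of_integrableOn hs hε hx₀
    (hPc.continuousOn.mono (Ici_subset_Ici.2 hx₀.le))
    (fun z hz => (hPpos z (hx₀.trans_le hz)).le) hInt
  obtain ⟨γ, hγ, -⟩ := hsol 1 one_pos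
  exact ⟨hsol, γ, hγ⟩
end
end

section
/- Let s > 0 and let P satisfy H1. Fix x₀ > 0 and suppose ∫_{x₀}^∞ P(z)·z^{−1−2/s} dz = ∞ (the integral diverges). Then for no initial value γ₀ > 0 does there exist a positive solution γ of the Dyson–Schwinger ODE on the whole interval [x₀, ∞) with γ(x₀) = γ₀. -/
open Real MeasureTheory Filter Set

noncomputable section

/-!
Along a positive solution, the Lyapunov function `L(x) = x^(-2/s) (1 + γ(x))²` satisfies
`L' = -(2/s) · P(x) x^(-1-2/s) · (1 + γ)/γ ≤ -(2/s) · P(x) x^(-1-2/s)`.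
Since `L ≥ 0`, integrating gives `∫_{x₀}^b P(z) z^(-1-2/s) dz ≤ (s/2) L(x₀)` for every `b`,
so the integral converges.
-/

theorem integrableOn_Ici_of_intervalIntegral_le {f : ℝ → ℝ} {a C : ℝ}
    (hf : ContinuousOn f (Ici a)) (hf_nonneg : ∀ x ∈ Ici a, 0 ≤ f x)
    (hC : ∀ b, a ≤ b → ∫ x in a..b, f x ≤ C) : IntegrableOn f (Ici a) := by
  rw [integrableOn_Ici_iff_integrableOn_Ioi]
  refine integrableOn_Ioi_of_intervalIntegral_norm_bounded C a (l := atTop) (b := id)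
    (fun b => ((hf.mono Icc_subset_Ici_self).integrableOn_Icc).mono_set Ioc_subset_Icc_self)
    tendsto_id ?_
  filter_upwards [eventually_ge_atTop a] with b hb
  have hnorm : EqOn (fun x => ‖f x‖) f (uIcc a b) := fun x hx =>
    norm_of_nonneg (hf_nonneg x (uIcc_of_le hb ▸ hx).1)
  rw [id, intervalIntegral.integral_congr hnorm]
  exact hC b hb

theorem ContinuousOn.div_rpow_Ici {f : ℝ → ℝ} {a : ℝ} (ha : 0 < a) (hf : ContinuousOn f (Ici a))
    (p : ℝ) : ContinuousOn (fun x => f x / x ^ p) (Ici a) :=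
  hf.div (continuousOn_id.rpow_const fun _ hx => Or.inl (ha.trans_le hx).ne')
    fun _ hx => (rpow_pos_of_pos (ha.trans_le hx) p).ne'

def dsLyapunov (s : ℝ) (γ : ℝ → ℝ) (x : ℝ) : ℝ := x ^ (-(2 / s)) * (1 + γ x) ^ 2

theorem hasDerivAt_dsLyapunov {s x : ℝ} {P γ : ℝ → ℝ} (hs : s ≠ 0) (hx : 0 < x) (hγ : γ x ≠ 0)
    (h : HasDerivAt γ ((γ x + γ x ^ 2 - P x) / (s * x * γ x)) x) :
    HasDerivAt (dsLyapunov s γ) (-(2 / s) * (P x / x ^ (1 + 2 / s)) * ((1 + γ x) / γ x)) x := by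
  have hweight := hasDerivAt_rpow_const (p := -(2 / s)) (Or.inl hx.ne')
  refine (hweight.mul ((h.const_add 1).pow 2)).congr_deriv ?_
  have hpow : x ^ (1 + 2 / s) = x * (x ^ (-(2 / s)))⁻¹ := by
    rw [rpow_add hx, rpow_one, rpow_neg hx.le, inv_inv]
  rw [Pi.pow_apply, rpow_sub_one hx.ne', hpow]
  have hweight_pos : 0 < x ^ (-(2 / s)) := rpow_pos_of_pos hx _
  field_simp
  ring

namespace IsDSSolution

variable {s x₀ : ℝ} {P γ : ℝ → ℝ}

theorem continuousOn {I : Set ℝ} (h : IsDSSolution s P γ I) : ContinuousOn γ I :=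
  fun x hx => (h.2 x hx).continuousWithinAt

theorem hasDerivAt_Ioi (h : IsDSSolution s P γ (Ici x₀)) {x : ℝ} (hx : x₀ < x) :
    HasDerivAt γ ((γ x + γ x ^ 2 - P x) / (s * x * γ x)) x :=
  (h.2 x hx.le).hasDerivAt (Ici_mem_nhds hx)

theorem integral_le_dsLyapunov (h : IsDSSolution s P γ (Ici x₀)) (hs : 0 < s) (hx₀ : 0 < x₀)
    (hP : ∀ x ∈ Ici x₀, 0 ≤ P x) (hPc : ContinuousOn P (Ici x₀)) {b : ℝ} (hb : x₀ ≤ b) :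
    ∫ x in x₀..b, P x / x ^ (1 + 2 / s) ≤ s / 2 * dsLyapunov s γ x₀ := by
  have hLc : ContinuousOn (dsLyapunov s γ) (Ici x₀) :=
    (continuousOn_id.rpow_const fun _ hx => Or.inl (hx₀.trans_le hx).ne').mul
      ((continuousOn_const.add h.continuousOn).pow 2)
  have hL_nonneg : 0 ≤ s / 2 * dsLyapunov s γ b :=
    mul_nonneg (half_pos hs).le (mul_nonneg (rpow_nonneg (hx₀.trans_le hb).le _) (sq_nonneg _))
  have hbound := intervalIntegral.integral_le_sub_of_hasDeriv_right_of_le hb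
    (g := fun x => -(s / 2) * dsLyapunov s γ x)
    (g' := fun x => P x / x ^ (1 + 2 / s) * ((1 + γ x) / γ x))
    ((continuousOn_const.mul hLc).mono Icc_subset_Ici_self)
    (fun x hx => by
      have hL := (hasDerivAt_dsLyapunov hs.ne' (hx₀.trans hx.1) (h.1 x hx.1.le).ne'
        (h.hasDerivAt_Ioi hx.1)).const_mul (-(s / 2))
      refine (hL.congr_deriv ?_).hasDerivWithinAt
      field_simp)
    (((hPc.div_rpow_Ici hx₀ _).mono Icc_subset_Ici_self).integrableOn_Icc)
    (fun x hx => by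
      have hγ := h.1 x hx.1.le
      refine le_mul_of_one_le_right
        (div_nonneg (hP x hx.1.le) (rpow_nonneg (hx₀.trans hx.1).le _)) ?_
      rw [le_div_iff₀ hγ]
      linarith)
  linarith

end IsDSSolution

theorem stmt_1 (s : ℝ) (hs : 0 < s) (P : ℝ → ℝ) (hP : H1 P) (x₀ : ℝ) (hx₀ : 0 < x₀)
    (hInt : ¬ MeasureTheory.IntegrableOn (fun z => P z / z ^ (1 + 2 / s)) (Set.Ici x₀)) :
    ∀ γ₀ > (0 : ℝ), ¬ ∃ γ : ℝ → ℝ, IsDSSolution s P γ (Set.Ici x₀) ∧ γ x₀ = γ₀ := by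
  rintro γ₀ - ⟨γ, hsol, -⟩
  obtain ⟨hP_smooth, -, hP_pos⟩ := hP
  have hPc : ContinuousOn P (Ici x₀) := hP_smooth.continuousOn.mono (Ici_subset_Ici.2 hx₀.le)
  have hP_nonneg : ∀ x ∈ Ici x₀, 0 ≤ P x := fun x hx => (hP_pos x (hx₀.trans_le hx)).le
  exact hInt <| integrableOn_Ici_of_intervalIntegral_le (hPc.div_rpow_Ici hx₀ _)
    (fun x hx => div_nonneg (hP_nonneg x hx) (rpow_nonneg (hx₀.trans_le hx).le _))
    fun b hb => hsol.integral_le_dsLyapunov hs hx₀ hP_nonneg hPc hb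
end
end

section
/- Let s > 0, let P satisfy H1, and let 0 < x₀ ≤ x₁. If γ is a positive solution of the Dyson–Schwinger ODE on [x₀, x₁], then for every x ∈ [x₀, x₁] one has the a priori bound γ(x) ≤ (x/x₀)^{1/s}·(1 + γ(x₀)) − 1. -/
open Real MeasureTheory Filter Set

noncomputable section

theorem stmt_4 (s : ℝ) (hs : 0 < s) (P : ℝ → ℝ) (hP : H1 P) (x₀ x₁ : ℝ)
    (hx₀ : 0 < x₀) (hx₀₁ : x₀ ≤ x₁) (γ : ℝ → ℝ)
    (hγ : IsDSSolution s P γ (Set.Icc x₀ x₁)) :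
    ∀ x ∈ Set.Icc x₀ x₁, γ x ≤ (x / x₀) ^ (1 / s) * (1 + γ x₀) - 1 := by
  obtain ⟨hpos, hderiv⟩ := hγ
  have hPpos := hP.2.2
  set p : ℝ := -(1/s) with hp
  set f : ℝ → ℝ := fun x => (1 + γ x) * x ^ p with hfdef
  have hcont : ContinuousOn γ (Set.Icc x₀ x₁) :=
    fun x hx => (hderiv x hx).continuousWithinAt
  have hfc : ContinuousOn f (Set.Icc x₀ x₁) := by
    apply (continuousOn_const.add hcont).mul
    exact continuousOn_id.rpow_const (fun x hx => Or.inl (ne_of_gt (lt_of_lt_of_le hx₀ hx.1)))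
  have hint : interior (Set.Icc x₀ x₁) = Set.Ioo x₀ x₁ := interior_Icc
  have key : ∀ x ∈ interior (Set.Icc x₀ x₁),
      HasDerivAt f ((γ x + (γ x) ^ 2 - P x) / (s * x * γ x) * x ^ p
        + (1 + γ x) * (p * x ^ (p - 1))) x := by
    intro x hx
    rw [hint] at hx
    have hxpos : 0 < x := lt_trans hx₀ hx.1
    have hγ' : HasDerivAt γ ((γ x + (γ x) ^ 2 - P x) / (s * x * γ x)) x := by
      have := hderiv x (Set.mem_Icc.mpr ⟨le_of_lt hx.1, le_of_lt hx.2⟩)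
      exact this.hasDerivAt (Icc_mem_nhds hx.1 hx.2)
    have hr : HasDerivAt (fun y : ℝ => y ^ p) (p * x ^ (p - 1)) x :=
      Real.hasDerivAt_rpow_const (Or.inl (ne_of_gt hxpos))
    exact ((hγ'.const_add 1).mul hr)
  have hdiff : DifferentiableOn ℝ f (interior (Set.Icc x₀ x₁)) :=
    fun x hx => ((key x hx).differentiableAt).differentiableWithinAt
  have hle : ∀ x ∈ interior (Set.Icc x₀ x₁), deriv f x ≤ 0 := by
    intro x hx
    rw [(key x hx).deriv]
    rw [hint] at hx
    have hxpos : 0 < x := lt_trans hx₀ hx.1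
    have hxmem : x ∈ Set.Icc x₀ x₁ := ⟨le_of_lt hx.1, le_of_lt hx.2⟩
    have hγx : 0 < γ x := hpos x hxmem
    have hPx : 0 < P x := hPpos x hxpos
    have hrp : (0:ℝ) < x ^ p := Real.rpow_pos_of_pos hxpos p
    have hrp1 : x ^ (p - 1) = x ^ p / x := by
      rw [Real.rpow_sub hxpos, Real.rpow_one]
    have hd : (γ x + (γ x) ^ 2 - P x) / (s * x * γ x) ≤ (1 + γ x) / (s * x) := by
      rw [div_le_div_iff₀ (by positivity) (by positivity)]
      nlinarith [mul_pos hs hxpos, mul_pos (mul_pos hs hxpos) hγx]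
    have h2 : (1 + γ x) * (p * x ^ (p - 1)) = -((1 + γ x) / (s * x) * x ^ p) := by
      rw [hrp1, hp]; field_simp
    rw [h2]
    have := mul_le_mul_of_nonneg_right hd (le_of_lt hrp)
    linarith
  have hanti : AntitoneOn f (Set.Icc x₀ x₁) :=
    antitoneOn_of_deriv_nonpos (convex_Icc x₀ x₁) hfc hdiff hle
  intro x hx
  have h0 : x₀ ∈ Set.Icc x₀ x₁ := ⟨le_refl _, hx₀₁⟩
  have hfx := hanti h0 hx hx.1
  -- f x ≤ f x₀ : (1+γ x)*x^p ≤ (1+γ x₀)*x₀^p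
  have hxpos : 0 < x := lt_of_lt_of_le hx₀ hx.1
  have hrpx : (0:ℝ) < x ^ p := Real.rpow_pos_of_pos hxpos p
  have hrpx0 : (0:ℝ) < x₀ ^ p := Real.rpow_pos_of_pos hx₀ p
  have hdiv : (x / x₀) ^ (1/s) = x₀ ^ p / x ^ p := by
    rw [Real.div_rpow (le_of_lt hxpos) (le_of_lt hx₀), hp,
      Real.rpow_neg (le_of_lt hxpos), Real.rpow_neg (le_of_lt hx₀)]
    field_simp
  have : (1 + γ x) ≤ (1 + γ x₀) * x₀ ^ p / x ^ p := by
    rw [le_div_iff₀ hrpx]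
    simpa [f] using hfx
  rw [hdiv]
  calc γ x = (1 + γ x) - 1 := by ring
    _ ≤ (1 + γ x₀) * x₀ ^ p / x ^ p - 1 := by linarith
    _ = x₀ ^ p / x ^ p * (1 + γ x₀) - 1 := by ring
end
end

section
/- Let s > 0, let P satisfy H1, and let x₀ > 0. If γ is a positive solution of the Dyson–Schwinger ODE on [x₀, ∞), then for every x ≥ x₀: γ(x) ≤ x^{1/s} · ( (1 + γ(x₀))/x₀^{1/s} − (x₀^{1/s} / (s·(1 + γ(x₀)))) · ∫_{x₀}^x P(z)·z^{−1−2/s} dz ) − 1. -/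
open Real MeasureTheory Filter Set

noncomputable section

/-! The rescaled solution `h(z) = (1 + γ z) / z ^ (1/s)` (`dsRescaled s γ`) satisfies
`h' = -P / (s z γ z^(1/s))`: the terms `γ + γ²` of the equation cancel exactly against the
derivative of `z ^ (-1/s)`. Since `P > 0`, `h` is decreasing, which bounds `γ y` by
`(1 + γ x₀) (y / x₀) ^ (1/s)`. Feeding this bound back into `h'` gives
`h' ≤ -x₀^(1/s) / (s (1 + γ x₀)) · P(z) z^(-1-2/s)`, and integrating from `x₀` to `x` yields the
claim. -/

def dsRescaled (s : ℝ) (γ : ℝ → ℝ) (z : ℝ) : ℝ := (1 + γ z) / z ^ (1 / s)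

theorem hasDerivWithinAt_dsRescaled {s : ℝ} (hs : s ≠ 0) {P γ : ℝ → ℝ} {I : Set ℝ} {z : ℝ}
    (hz : 0 < z) (hγz : γ z ≠ 0)
    (hγ : HasDerivWithinAt γ ((γ z + γ z ^ 2 - P z) / (s * z * γ z)) I z) :
    HasDerivWithinAt (dsRescaled s γ) (-P z / (s * z * γ z * z ^ (1 / s))) I z := by
  have hzs : z ^ (1 / s) ≠ 0 := (rpow_pos_of_pos hz _).ne'
  have hpow : HasDerivWithinAt (fun z : ℝ => z ^ (1 / s)) (1 / s * (z ^ (1 / s) / z)) I z := by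
    rw [← rpow_sub_one hz.ne']
    exact (hasDerivAt_rpow_const (Or.inl hz.ne')).hasDerivWithinAt
  refine ((hγ.const_add 1).div hpow hzs).congr_deriv ?_
  field_simp
  ring

namespace IsDSSolution

variable {s : ℝ} {P γ : ℝ → ℝ} {x₀ : ℝ}

theorem hasDerivWithinAt_dsRescaled_Ici (hs : 0 < s) (hx₀ : 0 < x₀)
    (hγ : IsDSSolution s P γ (Ici x₀)) {z : ℝ} (hz : x₀ ≤ z) :
    HasDerivWithinAt (dsRescaled s γ) (-P z / (s * z * γ z * z ^ (1 / s))) (Ici x₀) z :=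
  _root_.hasDerivWithinAt_dsRescaled hs.ne' (hx₀.trans_le hz) (hγ.1 z hz).ne' (hγ.2 z hz)

theorem continuousOn_dsRescaled (hs : 0 < s) (hx₀ : 0 < x₀) (hγ : IsDSSolution s P γ (Ici x₀)) :
    ContinuousOn (dsRescaled s γ) (Ici x₀) := fun _ hz =>
  (hγ.hasDerivWithinAt_dsRescaled_Ici hs hx₀ hz).continuousWithinAt

theorem antitoneOn_dsRescaled (hs : 0 < s) (hx₀ : 0 < x₀) (hP : ∀ z ∈ Ioi x₀, 0 ≤ P z)
    (hγ : IsDSSolution s P γ (Ici x₀)) : AntitoneOn (dsRescaled s γ) (Ici x₀) := by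
  refine antitoneOn_of_hasDerivWithinAt_nonpos (f' := fun z => -P z / (s * z * γ z * z ^ (1 / s)))
    (convex_Ici x₀) (hγ.continuousOn_dsRescaled hs hx₀) (fun z hz => ?_) (fun z hz => ?_)
  all_goals rw [interior_Ici] at hz
  · rw [interior_Ici]
    exact (hγ.hasDerivWithinAt_dsRescaled_Ici hs hx₀ hz.le).mono Ioi_subset_Ici_self
  · have hz₀ : 0 < z := hx₀.trans hz
    have hγz : 0 < γ z := hγ.1 z (mem_Ici.2 hz.le)
    rw [neg_div]
    exact neg_nonpos.2 (div_nonneg (hP z hz) (by positivity))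

theorem dsRescaled_deriv_le (hs : 0 < s) (hx₀ : 0 < x₀) (hP : ∀ z ∈ Ioi x₀, 0 ≤ P z)
    (hγ : IsDSSolution s P γ (Ici x₀)) {y : ℝ} (hy : x₀ < y) :
    -P y / (s * y * γ y * y ^ (1 / s)) ≤
      -(x₀ ^ (1 / s) / (s * (1 + γ x₀)) * (P y / y ^ (1 + 2 / s))) := by
  have hy₀ : 0 < y := hx₀.trans hy
  have hγy : 0 < γ y := hγ.1 y (mem_Ici.2 hy.le)
  have hγ₀ : 0 < γ x₀ := hγ.1 x₀ self_mem_Ici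
  have hPy : 0 ≤ P y := hP y hy
  have hX₀ : 0 < x₀ ^ (1 / s) := rpow_pos_of_pos hx₀ _
  have hY : 0 < y ^ (1 / s) := rpow_pos_of_pos hy₀ _
  have hmono : (1 + γ y) * x₀ ^ (1 / s) ≤ (1 + γ x₀) * y ^ (1 / s) := by
    have := hγ.antitoneOn_dsRescaled hs hx₀ hP self_mem_Ici (mem_Ici.2 hy.le) hy.le
    rwa [dsRescaled, dsRescaled, div_le_div_iff₀ hY hX₀] at this
  have hpow : y ^ (1 + 2 / s) = y * (y ^ (1 / s)) ^ 2 := by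
    rw [show 1 + 2 / s = 1 + (1 / s + 1 / s) by ring, rpow_add hy₀, rpow_add hy₀, rpow_one]
    ring
  rw [hpow, neg_div, neg_le_neg_iff, div_mul_div_comm,
    div_le_div_iff₀ (by positivity) (by positivity)]
  calc x₀ ^ (1 / s) * P y * (s * y * γ y * y ^ (1 / s))
      = s * y * P y * y ^ (1 / s) * (γ y * x₀ ^ (1 / s)) := by ring
    _ ≤ s * y * P y * y ^ (1 / s) * ((1 + γ x₀) * y ^ (1 / s)) :=
        mul_le_mul_of_nonneg_left (by linarith) (by positivity)
    _ = P y * (s * (1 + γ x₀) * (y * (y ^ (1 / s)) ^ 2)) := by ring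

theorem dsRescaled_sub_le_integral (hs : 0 < s) (hx₀ : 0 < x₀) (hP : ∀ z ∈ Ioi x₀, 0 ≤ P z)
    (hγ : IsDSSolution s P γ (Ici x₀)) {x : ℝ} (hx : x₀ ≤ x) (hPc : ContinuousOn P (Icc x₀ x)) :
    dsRescaled s γ x - dsRescaled s γ x₀ ≤
      -(x₀ ^ (1 / s) / (s * (1 + γ x₀)) * ∫ z in x₀..x, P z / z ^ (1 + 2 / s)) := by
  have hint : IntegrableOn
      (fun z => -(x₀ ^ (1 / s) / (s * (1 + γ x₀)) * (P z / z ^ (1 + 2 / s)))) (Icc x₀ x) := by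
    refine ((continuousOn_const.mul (hPc.div ?_ fun z hz => ?_)).neg).integrableOn_Icc
    · exact continuousOn_id.rpow_const fun z hz => Or.inl (hx₀.trans_le hz.1).ne'
    · exact (rpow_pos_of_pos (hx₀.trans_le hz.1) _).ne'
  rw [← intervalIntegral.integral_const_mul, ← intervalIntegral.integral_neg]
  exact intervalIntegral.sub_le_integral_of_hasDeriv_right_of_le hx
    ((hγ.continuousOn_dsRescaled hs hx₀).mono Icc_subset_Ici_self)
    (fun y hy => (hγ.hasDerivWithinAt_dsRescaled_Ici hs hx₀ hy.1.le).mono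
      (Ioi_subset_Ici_self.trans (Ici_subset_Ici.2 hy.1.le)))
    hint (fun y hy => hγ.dsRescaled_deriv_le hs hx₀ hP hy.1)

end IsDSSolution

theorem stmt_5 (s : ℝ) (hs : 0 < s) (P : ℝ → ℝ) (hP : H1 P) (x₀ : ℝ) (hx₀ : 0 < x₀)
    (γ : ℝ → ℝ) (hγ : IsDSSolution s P γ (Set.Ici x₀)) :
    ∀ x ≥ x₀,
      γ x ≤ x ^ (1 / s) * ((1 + γ x₀) / x₀ ^ (1 / s) -
        x₀ ^ (1 / s) / (s * (1 + γ x₀)) * ∫ z in x₀..x, P z / z ^ (1 + 2 / s)) - 1 := by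
  intro x hx
  have hX : 0 < x ^ (1 / s) := rpow_pos_of_pos (hx₀.trans_le hx) _
  have key := hγ.dsRescaled_sub_le_integral hs hx₀ (fun z hz => (hP.2.2 z (hx₀.trans hz)).le) hx
    (hP.1.continuousOn.mono fun z hz => hx₀.le.trans hz.1)
  have hγx : γ x = x ^ (1 / s) * dsRescaled s γ x - 1 := by
    rw [dsRescaled, mul_div_cancel₀ _ hX.ne']
    ring
  rw [hγx]
  gcongr
  unfold dsRescaled at key ⊢
  linarith
end
end

section
/- Let s > 0 and let P satisfy H1 and H2. For every x₀ > 0 and every γ₀ > 0 there exists a positive solution γ of the Dyson–Schwinger ODE on the half-open interval (0, x₀] with γ(x₀) = γ₀, and every such solution satisfies min(γ_c(x), γ₀) ≤ γ(x) ≤ max(γ_c(x₀), γ₀) for all x ∈ (0, x₀]; that is, every local positive solution can be continued down to x = 0. -/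
open Real MeasureTheory Filter Set

noncomputable section

open scoped Topology NNReal

/-!
Below the nullcline `γ_c` the field `γ'` is negative and above it positive. Running backwards
from `x₀`, a solution can therefore cross neither the nondecreasing lower barrier
`min (γ_c x) γ₀` downwards nor the level `max (γ_c x₀) γ₀` upwards, which gives the bounds.
On each `[a, x₀]` with `a > 0` the field is Lipschitz on this band, so Picard–Lindelöf for the
field with the state clipped to the band yields a solution, which by the same barriers never
leaves the band. Uniqueness makes these solutions agree on overlaps, and they glue to a solution
on `(0, x₀]`.
-/

section

def dsField (s : ℝ) (P : ℝ → ℝ) (t y : ℝ) : ℝ := (y + y ^ 2 - P t) / (s * t * y)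

variable {s : ℝ} {P : ℝ → ℝ}

theorem H1.nonneg (hP1 : H1 P) {t : ℝ} (ht : 0 ≤ t) : 0 ≤ P t := by
  rcases ht.eq_or_lt with rfl | ht
  · exact hP1.2.1.ge
  · exact (hP1.2.2 t ht).le

theorem H1.continuousOn_Icc (hP1 : H1 P) {a b : ℝ} (ha : 0 ≤ a) : ContinuousOn P (Icc a b) :=
  hP1.1.continuousOn.mono fun _ ht => ha.trans ht.1

theorem H2.monotoneOn_Icc (hP2 : H2 P) {a b : ℝ} (ha : 0 ≤ a) : MonotoneOn P (Icc a b) :=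
  hP2.monotoneOn.mono fun _ ht => ha.trans ht.1

theorem gammaC_add_sq {t : ℝ} (ht : 0 ≤ P t) : gammaC P t + gammaC P t ^ 2 = P t := by
  have h := Real.sq_sqrt (show 0 ≤ 1 + 4 * P t by linarith)
  unfold gammaC
  linear_combination h / 4

theorem add_sq_sub_eq_mul_sub_gammaC {t : ℝ} (ht : 0 ≤ P t) (u : ℝ) :
    u + u ^ 2 - P t = (u - gammaC P t) * (1 + u + gammaC P t) := by
  linear_combination gammaC_add_sq ht

theorem gammaC_nonneg {t : ℝ} (ht : 0 ≤ P t) : 0 ≤ gammaC P t := by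
  have : 1 ≤ √(1 + 4 * P t) := Real.one_le_sqrt.2 (by linarith)
  unfold gammaC
  linarith

theorem gammaC_pos {t : ℝ} (ht : 0 < P t) : 0 < gammaC P t := by
  have : 1 < √(1 + 4 * P t) := Real.lt_sqrt_of_sq_lt (by linarith)
  unfold gammaC
  linarith

theorem gammaC_le_gammaC {u v : ℝ} (h : P u ≤ P v) : gammaC P u ≤ gammaC P v := by
  unfold gammaC
  gcongr

theorem ContinuousOn.gammaC {I : Set ℝ} (hP : ContinuousOn P I) : ContinuousOn (gammaC P) I :=
  (((continuousOn_const.add (continuousOn_const.mul hP)).sqrt).sub continuousOn_const).div_const 2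

theorem dsField_nonpos (hs : 0 < s) {t u : ℝ} (ht : 0 < t) (hPt : 0 ≤ P t) (hu : 0 < u)
    (h : u ≤ gammaC P t) : dsField s P t u ≤ 0 := by
  have := gammaC_nonneg hPt
  rw [dsField, add_sq_sub_eq_mul_sub_gammaC hPt]
  exact div_nonpos_of_nonpos_of_nonneg
    (mul_nonpos_of_nonpos_of_nonneg (by linarith) (by linarith)) (by positivity)

theorem dsField_nonneg (hs : 0 < s) {t u : ℝ} (ht : 0 < t) (hPt : 0 ≤ P t)
    (h : gammaC P t ≤ u) : 0 ≤ dsField s P t u := by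
  have := gammaC_nonneg hPt
  rw [dsField, add_sq_sub_eq_mul_sub_gammaC hPt]
  have hu : 0 ≤ u := by linarith
  exact div_nonneg (mul_nonneg (by linarith) (by linarith)) (by positivity)

section Barrier

variable {f f' m : ℝ → ℝ} {a b : ℝ}

theorem le_of_deriv_nonpos_below (hf : ContinuousOn f (Icc a b))
    (hf' : ∀ y ∈ Ioo a b, HasDerivAt f (f' y) y) (hm : ContinuousOn m (Icc a b))
    (hm_mono : MonotoneOn m (Icc a b)) (hsign : ∀ y ∈ Ioo a b, f y < m y → f' y ≤ 0)
    (hb : m b ≤ f b) : ∀ x ∈ Icc a b, m x ≤ f x := by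
  intro x hx
  have hxb : Icc x b ⊆ Icc a b := Icc_subset_Icc_left hx.1
  set S := {y ∈ Icc x b | m y ≤ f y}
  have hS : IsClosed S := isClosed_Icc.isClosed_le (hm.mono hxb) (hf.mono hxb)
  have hbS : b ∈ S := ⟨⟨hx.2, le_rfl⟩, hb⟩
  have hcS : sInf S ∈ S := hS.csInf_mem ⟨b, hbS⟩ ⟨x, fun y hy => hy.1.1⟩
  have hc : sInf S ∈ Icc a b := hxb hcS.1
  -- to the left of the first contact point `sInf S`, `f` stays below `m`, hence decreases
  have hbelow : ∀ y ∈ Ioo x (sInf S), y ∈ Ioo a b ∧ f y < m y := fun y hy =>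
    ⟨⟨hx.1.trans_lt hy.1, hy.2.trans_le hc.2⟩, lt_of_not_ge fun hle =>
      (csInf_le ⟨x, fun z hz => hz.1.1⟩
        (show y ∈ S from ⟨⟨hy.1.le, hy.2.le.trans hcS.1.2⟩, hle⟩)).not_gt hy.2⟩
  have hanti : AntitoneOn f (Icc x (sInf S)) := by
    refine antitoneOn_of_hasDerivWithinAt_nonpos (f' := f') (convex_Icc _ _)
      (hf.mono (Icc_subset_Icc hx.1 hc.2)) (fun y hy => ?_) (fun y hy => ?_) <;>
      rw [interior_Icc] at hy
    · rw [interior_Icc]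
      exact (hf' y (hbelow y hy).1).hasDerivWithinAt
    · exact hsign y (hbelow y hy).1 (hbelow y hy).2
  calc m x ≤ m (sInf S) := hm_mono hx hc hcS.1.1
    _ ≤ f (sInf S) := hcS.2
    _ ≤ f x := hanti ⟨le_rfl, hcS.1.1⟩ ⟨hcS.1.1, le_rfl⟩ hcS.1.1

theorem le_of_deriv_nonneg_above {M : ℝ} (hf : ContinuousOn f (Icc a b))
    (hf' : ∀ y ∈ Ioo a b, HasDerivAt f (f' y) y) (hsign : ∀ y ∈ Ioo a b, M < f y → 0 ≤ f' y)
    (hb : f b ≤ M) : ∀ x ∈ Icc a b, f x ≤ M := by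
  intro x hx
  have := le_of_deriv_nonpos_below (f := -f) (f' := -f') (m := fun _ => -M) hf.neg
    (fun y hy => (hf' y hy).neg) continuousOn_const (fun _ _ _ _ _ => le_rfl)
    (fun y hy hlt => neg_nonpos.2 (hsign y hy (neg_lt_neg_iff.1 hlt))) (neg_le_neg hb) x hx
  simpa using this

theorem mem_band_of_deriv_sign {γ₀ : ℝ} (hPc : ContinuousOn P (Icc a b))
    (hPm : MonotoneOn P (Icc a b)) (hf : ContinuousOn f (Icc a b))
    (hf' : ∀ y ∈ Ioo a b, HasDerivAt f (f' y) y)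
    (hlow : ∀ y ∈ Ioo a b, f y < min (gammaC P y) γ₀ → f' y ≤ 0)
    (hup : ∀ y ∈ Ioo a b, max (gammaC P b) γ₀ < f y → 0 ≤ f' y) (hb : f b = γ₀) :
    ∀ x ∈ Icc a b, min (gammaC P x) γ₀ ≤ f x ∧ f x ≤ max (gammaC P b) γ₀ := fun x hx =>
  ⟨le_of_deriv_nonpos_below hf hf' (hPc.gammaC.inf continuousOn_const)
      (fun _ hu _ hv huv => min_le_min_right _ (gammaC_le_gammaC (hPm hu hv huv))) hlow
      (hb ▸ min_le_right _ _) x hx,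
    le_of_deriv_nonneg_above hf hf' hup (hb ▸ le_max_right _ _) x hx⟩

end Barrier

theorem dsField_lipschitzOnWith (hs : 0 < s) {a t l B : ℝ} (ha : 0 < a) (hat : a ≤ t)
    (hl : 0 < l) (hPt : 0 ≤ P t) (hPB : P t ≤ B) :
    LipschitzOnWith (Real.toNNReal ((1 + B / l ^ 2) / (s * a))) (dsField s P t) (Ici l) := by
  refine LipschitzOnWith.of_dist_le_mul fun u hu v hv => ?_
  have hluv : l ^ 2 ≤ u * v := by rw [sq]; exact mul_le_mul hu hv hl.le (hl.le.trans hu)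
  have hu : 0 < u := hl.trans_le hu
  have hv : 0 < v := hl.trans_le hv
  have ht : 0 < t := ha.trans_le hat
  have hB : 0 ≤ B := hPt.trans hPB
  have key : dsField s P t u - dsField s P t v = (1 + P t / (u * v)) / (s * t) * (u - v) := by
    unfold dsField
    field_simp
    ring
  rw [Real.dist_eq, Real.dist_eq, key, abs_mul, abs_of_pos (by positivity),
    Real.coe_toNNReal _ (by positivity)]
  gcongr

theorem exists_forall_mem_Icc_hasDerivWithinAt_of_lipschitzWith {E : Type*}
    [NormedAddCommGroup E] [NormedSpace ℝ E] [CompleteSpace E] {v : ℝ → E → E} {a b : ℝ}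
    (t₀ : Icc a b) (x₀ : E) {K : ℝ≥0} {C : ℝ} (hlip : ∀ t ∈ Icc a b, LipschitzWith K (v t))
    (hcont : ∀ x, ContinuousOn (v · x) (Icc a b)) (hbound : ∀ t ∈ Icc a b, ∀ x, ‖v t x‖ ≤ C) :
    ∃ α : ℝ → E, α t₀ = x₀ ∧ ∀ t ∈ Icc a b, HasDerivWithinAt α (v t (α t)) (Icc a b) t := by
  have hab : 0 ≤ b - a := by linarith [t₀.2.1, t₀.2.2]
  have hPL : IsPicardLindelof v t₀ x₀ (C.toNNReal * (b - a).toNNReal) 0 C.toNNReal K :=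
    { lipschitzOnWith := fun t ht => (hlip t ht).lipschitzOnWith
      continuousOn := fun x _ => hcont x
      norm_le := fun t ht x _ => (hbound t ht x).trans (Real.le_coe_toNNReal C)
      mul_max_le := by
        rw [NNReal.coe_zero, sub_zero, NNReal.coe_mul, Real.coe_toNNReal _ hab]
        gcongr
        exact max_le (by linarith [t₀.2.1]) (by linarith [t₀.2.2]) }
  exact hPL.exists_eq_forall_mem_Icc_hasDerivWithinAt₀

theorem exists_hasDerivWithinAt_dsField_clip (hs : 0 < s) (hP1 : H1 P) (hP2 : H2 P)
    {a b l M y₀ : ℝ} (ha : 0 < a) (hab : a ≤ b) (hl : 0 < l) (hlM : l ≤ M) :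
    ∃ f : ℝ → ℝ, f b = y₀ ∧
      ∀ t ∈ Icc a b, HasDerivWithinAt f (dsField s P t (max l (min (f t) M))) (Icc a b) t := by
  set cl : ℝ → ℝ := fun y => max l (min y M)
  have hcl : ∀ y, cl y ∈ Icc l M := fun y => ⟨le_max_left _ _, max_le hlM (min_le_right _ _)⟩
  have hcl_lip : LipschitzWith 1 cl := (LipschitzWith.id.min_const M).const_max l
  have hcont : ContinuousOn (Function.uncurry (dsField s P)) (Icc a b ×ˢ Icc l M) := by
    have hP : ContinuousOn (fun p : ℝ × ℝ => P p.1) (Icc a b ×ˢ Icc l M) :=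
      (hP1.continuousOn_Icc ha.le).comp continuousOn_fst fun p hp => hp.1
    refine ((continuousOn_snd.add (continuousOn_snd.pow 2)).sub hP).div (by fun_prop)
      fun p hp => ?_
    have := ha.trans_le hp.1.1
    have := hl.trans_le hp.2.1
    positivity
  obtain ⟨C, hC⟩ := (isCompact_Icc.prod isCompact_Icc).exists_bound_of_continuousOn hcont
  exact exists_forall_mem_Icc_hasDerivWithinAt_of_lipschitzWith
    (v := fun t y => dsField s P t (cl y)) ⟨b, hab, le_rfl⟩ y₀
    (fun t ht => lipschitzOnWith_univ.1 <|
      (dsField_lipschitzOnWith hs ha ht.1 hl (hP1.nonneg (ha.le.trans ht.1))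
        (hP2.monotoneOn_Icc ha.le ht ⟨hab, le_rfl⟩ ht.2)).comp hcl_lip.lipschitzOnWith
        fun y _ => (hcl y).1)
    (fun y => hcont.comp (continuousOn_id.prodMk continuousOn_const) fun t ht => ⟨ht, hcl y⟩)
    (fun t ht y => hC (t, cl y) ⟨ht, hcl y⟩)

theorem exists_isDSSolution_Icc (hs : 0 < s) (hP1 : H1 P) (hP2 : H2 P) {a b γ₀ : ℝ}
    (ha : 0 < a) (hab : a ≤ b) (hγ₀ : 0 < γ₀) :
    ∃ f : ℝ → ℝ, IsDSSolution s P f (Icc a b) ∧ f b = γ₀ := by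
  set l := min (gammaC P a) γ₀
  set M := max (gammaC P b) γ₀
  have hl : 0 < l := lt_min (gammaC_pos (hP1.2.2 a ha)) hγ₀
  have hPm : MonotoneOn P (Icc a b) := hP2.monotoneOn_Icc ha.le
  have hl_le : ∀ t ∈ Icc a b, l ≤ min (gammaC P t) γ₀ := fun t ht =>
    min_le_min_right γ₀ (gammaC_le_gammaC (hPm ⟨le_rfl, hab⟩ ht ht.1))
  -- clipping the state to the band `[l, M]` makes the field globally Lipschitz and bounded
  obtain ⟨f, hfb, hf⟩ := exists_hasDerivWithinAt_dsField_clip (y₀ := γ₀) hs hP1 hP2 ha hab hl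
    ((min_le_right _ _).trans (le_max_right _ _) : l ≤ M)
  have hband := mem_band_of_deriv_sign (hP1.continuousOn_Icc ha.le) hPm
    (fun t ht => (hf t ht).continuousWithinAt)
    (fun t ht => (hf t (Ioo_subset_Icc_self ht)).hasDerivAt (Icc_mem_nhds ht.1 ht.2))
    (fun t ht hlt => dsField_nonpos hs (ha.trans ht.1) (hP1.nonneg (ha.trans ht.1).le)
      (hl.trans_le (le_max_left _ _)) (max_le ((hl_le t (Ioo_subset_Icc_self ht)).trans
        (min_le_left _ _)) ((min_le_left _ _).trans (hlt.le.trans (min_le_left _ _)))))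
    (fun t ht hgt => dsField_nonneg hs (ha.trans ht.1) (hP1.nonneg (ha.trans ht.1).le) <|
      calc gammaC P t ≤ M := (gammaC_le_gammaC (hPm (Ioo_subset_Icc_self ht)
            ⟨hab, le_rfl⟩ ht.2.le)).trans (le_max_left _ _)
        _ = min (f t) M := (min_eq_right hgt.le).symm
        _ ≤ max l (min (f t) M) := le_max_right _ _)
    hfb
  have hclip : ∀ t ∈ Icc a b, max l (min (f t) M) = f t := fun t ht => by
    rw [min_eq_left (hband t ht).2, max_eq_right ((hl_le t ht).trans (hband t ht).1)]
  refine ⟨f, ⟨fun t ht => hl.trans_le ((hl_le t ht).trans (hband t ht).1), fun t ht => ?_⟩, hfb⟩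
  rw [← hclip t ht]
  exact hf t ht

theorem hasDerivWithinAt_Ioc_of_eqOn_Icc {E : Type*} [NormedAddCommGroup E] [NormedSpace ℝ E]
    {v : ℝ → E → E} {b : ℝ} {g : ℝ → ℝ → E}
    (hg : ∀ a ∈ Ioo 0 b, ∀ t ∈ Icc a b, HasDerivWithinAt (g a) (v t (g a t)) (Icc a b) t)
    (hcompat : ∀ a ∈ Ioo 0 b, ∀ a' ∈ Ioo 0 b, a ≤ a' → EqOn (g a) (g a') (Icc a' b)) :
    ∀ t ∈ Ioc 0 b, HasDerivWithinAt (fun x => g (x / 2) x) (v t (g (t / 2) t)) (Ioc 0 b) t := by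
  intro t ht
  have ha : t / 4 ∈ Ioo 0 b := ⟨by linarith [ht.1], by linarith [ht.1, ht.2]⟩
  have heq : ∀ x ∈ Ioc 0 b, t / 2 < x → g (x / 2) x = g (t / 4) x := fun x hx htx =>
    (hcompat _ ha _ ⟨half_pos hx.1, (half_lt_self hx.1).trans_le hx.2⟩ (by linarith)
      ⟨half_le_self hx.1.le, hx.2⟩).symm
  have hev : (fun x => g (x / 2) x) =ᶠ[𝓝[Ioc 0 b] t] g (t / 4) := by
    filter_upwards [self_mem_nhdsWithin, mem_nhdsWithin_of_mem_nhds
      (Ioi_mem_nhds (half_lt_self ht.1))] with x hx htx using heq x hx htx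
  have hIcc : Icc (t / 4) b ∈ 𝓝[Ioc 0 b] t :=
    mem_nhdsWithin.2 ⟨Ioi (t / 4), isOpen_Ioi, show t / 4 < t by linarith [ht.1],
      fun x hx => ⟨hx.1.le, hx.2.2⟩⟩
  rw [heq t ht (half_lt_self ht.1)]
  exact ((hg _ ha t ⟨by linarith [ht.1], ht.2⟩).mono_of_mem_nhdsWithin hIcc).congr_of_eventuallyEq
    hev (heq t ht (half_lt_self ht.1))

namespace IsDSSolution

variable {f g : ℝ → ℝ} {a b : ℝ}

theorem mono {I J : Set ℝ} (hf : IsDSSolution s P f J) (hIJ : I ⊆ J) : IsDSSolution s P f I :=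
  ⟨fun x hx => hf.1 x (hIJ hx), fun x hx => (hf.2 x (hIJ hx)).mono hIJ⟩

theorem continuousOn_s9 (hf : IsDSSolution s P f (Icc a b)) : ContinuousOn f (Icc a b) :=
  fun t ht => (hf.2 t ht).continuousWithinAt

theorem mem_band (hf : IsDSSolution s P f (Icc a b)) (hs : 0 < s) (hP1 : H1 P) (hP2 : H2 P)
    (ha : 0 < a) {γ₀ : ℝ} (hb : f b = γ₀) :
    ∀ x ∈ Icc a b, min (gammaC P x) γ₀ ≤ f x ∧ f x ≤ max (gammaC P b) γ₀ := by
  have hPm : MonotoneOn P (Icc a b) := hP2.monotoneOn_Icc ha.le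
  refine mem_band_of_deriv_sign (hP1.continuousOn_Icc ha.le) hPm hf.continuousOn_s9
    (fun t ht => (hf.2 t (Ioo_subset_Icc_self ht)).hasDerivAt (Icc_mem_nhds ht.1 ht.2))
    (fun t ht hlt => ?_) (fun t ht hgt => ?_) hb
  · exact dsField_nonpos hs (ha.trans ht.1) (hP1.nonneg (ha.trans ht.1).le)
      (hf.1 t (Ioo_subset_Icc_self ht)) (hlt.le.trans (min_le_left _ _))
  · refine dsField_nonneg hs (ha.trans ht.1) (hP1.nonneg (ha.trans ht.1).le) ?_
    exact (gammaC_le_gammaC (hPm (Ioo_subset_Icc_self ht) (right_mem_Icc.2 (ht.1.trans ht.2).le)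
      ht.2.le)).trans ((le_max_left _ _).trans hgt.le)

theorem eqOn (hf : IsDSSolution s P f (Icc a b)) (hg : IsDSSolution s P g (Icc a b))
    (hs : 0 < s) (hP1 : H1 P) (hP2 : H2 P) (ha : 0 < a) (hfg : f b = g b) :
    EqOn f g (Icc a b) := by
  obtain ⟨cf, hcf, hfc⟩ := isCompact_Icc.exists_forall_le' hf.continuousOn_s9 hf.1
  obtain ⟨cg, hcg, hgc⟩ := isCompact_Icc.exists_forall_le' hg.continuousOn_s9 hg.1
  have hnhds : ∀ t ∈ Ioc a b, Icc a b ∈ 𝓝[≤] t := fun t ht => Icc_mem_nhdsLE_of_mem ht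
  exact ODE_solution_unique_of_mem_Icc_left (v := dsField s P) (s := fun _ => Ici (min cf cg))
    (fun t ht => dsField_lipschitzOnWith hs ha ht.1.le (lt_min hcf hcg)
      (hP1.nonneg (ha.trans ht.1).le) (hP2.monotoneOn (ha.trans ht.1).le
        (ha.trans (ht.1.trans_le ht.2)).le ht.2))
    hf.continuousOn_s9
    (fun t ht => (hf.2 t (Ioc_subset_Icc_self ht)).mono_of_mem_nhdsWithin (hnhds t ht))
    (fun t ht => (min_le_left _ _).trans (hfc t (Ioc_subset_Icc_self ht)))
    hg.continuousOn_s9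
    (fun t ht => (hg.2 t (Ioc_subset_Icc_self ht)).mono_of_mem_nhdsWithin (hnhds t ht))
    (fun t ht => (min_le_right _ _).trans (hgc t (Ioc_subset_Icc_self ht)))
    hfg

end IsDSSolution

end

theorem stmt_9 (s : ℝ) (hs : 0 < s) (P : ℝ → ℝ) (hP1 : H1 P) (hP2 : H2 P) :
    ∀ x₀ > (0 : ℝ), ∀ γ₀ > (0 : ℝ),
      (∃ γ : ℝ → ℝ, IsDSSolution s P γ (Set.Ioc 0 x₀) ∧ γ x₀ = γ₀) ∧
      ∀ γ : ℝ → ℝ, IsDSSolution s P γ (Set.Ioc 0 x₀) → γ x₀ = γ₀ →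
        ∀ x ∈ Set.Ioc (0 : ℝ) x₀,
          min (gammaC P x) γ₀ ≤ γ x ∧ γ x ≤ max (gammaC P x₀) γ₀ := by
  intro x₀ hx₀ γ₀ hγ₀
  refine ⟨?_, fun γ hγ hγx₀ x hx =>
    (hγ.mono fun y hy => ⟨hx.1.trans_le hy.1, hy.2⟩).mem_band hs hP1 hP2 hx.1 hγx₀ x
      ⟨le_rfl, hx.2⟩⟩
  choose! g hg hgx₀ using fun a (ha : a ∈ Ioo 0 x₀) =>
    exists_isDSSolution_Icc hs hP1 hP2 ha.1 ha.2.le hγ₀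
  have hcompat : ∀ a ∈ Ioo 0 x₀, ∀ a' ∈ Ioo 0 x₀, a ≤ a' → EqOn (g a) (g a') (Icc a' x₀) :=
    fun a ha a' ha' haa' => ((hg a ha).mono (Icc_subset_Icc_left haa')).eqOn (hg a' ha')
      hs hP1 hP2 ha'.1 (by rw [hgx₀ a ha, hgx₀ a' ha'])
  have hhalf : ∀ x ∈ Ioc 0 x₀, x / 2 ∈ Ioo 0 x₀ := fun x hx =>
    ⟨half_pos hx.1, (half_lt_self hx.1).trans_le hx.2⟩
  refine ⟨fun x => g (x / 2) x, ⟨fun x hx => ?_, ?_⟩, hgx₀ _ (hhalf x₀ ⟨hx₀, le_rfl⟩)⟩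
  · exact (hg _ (hhalf x hx)).1 x ⟨half_le_self hx.1.le, hx.2⟩
  · exact hasDerivWithinAt_Ioc_of_eqOn_Icc (v := dsField s P) (fun a ha => (hg a ha).2) hcompat
end
end

section
/- Let s > 0, let P satisfy H1, and fix x₀ > 0. If γ₁ and γ₂ are two positive solutions of the Dyson–Schwinger ODE on [x₀, ∞) with γ₂(x₀) < γ₁(x₀), then there exists a constant C₁ > 0 such that γ₁(x) − γ₂(x) ≥ C₁·x^{1/s} for all x ≥ x₀; in particular γ₁(x) ≥ C₁·x^{1/s} for all x ≥ x₀, so any global positive solution lying strictly above another global positive solution grows at least like x^{1/s}. -/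
open Real MeasureTheory Filter Set

noncomputable section

open Topology

/-
Along the ODE, `(γ + γ² − P)/γ = 1 + γ − P/γ`, so the gap `δ = γ₁ − γ₂` satisfies
`s x δ' = δ (1 + P/(γ₁γ₂))`. Hence `v = δ / x^{1/s}` solves the linear equation
`v' = P/(s x γ₁ γ₂) · v`, whose coefficient is positive: `v` can never decrease while it is positive,
so it stays above `v(x₀) > 0`, which gives `δ(x) ≥ v(x₀) x^{1/s}`, and `γ₁ > δ` as `γ₂ > 0`.
-/

theorem le_of_deriv_right_nonneg_of_pos {f f' : ℝ → ℝ} {a b : ℝ} (hab : a ≤ b)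
    (hf : ContinuousOn f (Icc a b)) (hf' : ∀ x ∈ Ico a b, HasDerivWithinAt f (f' x) (Ici x) x)
    (ha : 0 < f a) (hderiv : ∀ x ∈ Ico a b, 0 < f x → 0 ≤ f' x) : f a ≤ f b := by
  -- The fence is sloped so that the strict comparison theorem applies; letting `ε → 0` removes it.
  have fence : ∀ ε > 0, ε * (1 + (b - a)) < f a → f a - ε * (1 + (b - a)) ≤ f b := by
    intro ε hε hsmall
    have hfence := image_le_of_deriv_right_lt_deriv_boundary (fun x hx => (hf x hx).neg)
      (fun x hx => (hf' x hx).neg) (B := fun x => ε * (1 + (x - a)) - f a) (B' := fun _ => ε)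
      (by simp; linarith)
      (fun x => by
        simpa using ((((hasDerivAt_id x).sub_const a).const_add 1).const_mul ε).sub_const (f a))
      (fun x hx hfx => ?_) (right_mem_Icc.2 hab)
    · rw [Pi.neg_apply] at hfence
      linarith
    · have hfx_pos : 0 < f x := by
        have : ε * (1 + (x - a)) ≤ ε * (1 + (b - a)) := by gcongr; exact hx.2.le
        rw [Pi.neg_apply] at hfx
        linarith
      linarith [hderiv x hx hfx_pos]
  have hlim : Tendsto (fun ε => f a - ε * (1 + (b - a))) (𝓝[>] 0) (𝓝 (f a)) := by
    have : Continuous fun ε : ℝ => f a - ε * (1 + (b - a)) := by fun_prop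
    simpa using (this.tendsto 0).mono_left nhdsWithin_le_nhds
  have hsmall : ∀ᶠ ε in 𝓝[>] (0 : ℝ), ε * (1 + (b - a)) < f a := by
    have : Continuous fun ε : ℝ => ε * (1 + (b - a)) := by fun_prop
    exact eventually_nhdsWithin_of_eventually_nhds
      (this.continuousAt.eventually_lt continuousAt_const (by simpa using ha))
  refine le_of_tendsto hlim ?_
  filter_upwards [self_mem_nhdsWithin, hsmall] with ε hε hε' using fence ε hε hε'

theorem IsDSSolution.hasDerivWithinAt_sub_div_rpow {s : ℝ} {P γ₁ γ₂ : ℝ → ℝ} {I : Set ℝ}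
    (h₁ : IsDSSolution s P γ₁ I) (h₂ : IsDSSolution s P γ₂ I) {x : ℝ} (hxI : x ∈ I)
    (hx : 0 < x) :
    HasDerivWithinAt (fun y => (γ₁ y - γ₂ y) / y ^ (1 / s))
      (P x / (s * x * γ₁ x * γ₂ x) * ((γ₁ x - γ₂ x) / x ^ (1 / s))) I x := by
  have hγ₁ := h₁.1 x hxI
  have hγ₂ := h₂.1 x hxI
  have hpow : HasDerivWithinAt (fun y : ℝ => y ^ (1 / s)) (1 / s * x ^ (1 / s - 1)) I x :=
    (hasDerivAt_rpow_const (Or.inl hx.ne')).hasDerivWithinAt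
  refine (((h₁.2 x hxI).sub (h₂.2 x hxI)).div hpow (rpow_pos_of_pos hx _).ne').congr_deriv ?_
  rw [rpow_sub_one hx.ne', Pi.sub_apply]
  field_simp
  ring

theorem stmt_14 (s : ℝ) (hs : 0 < s) (P : ℝ → ℝ) (hP : H1 P)
    (x₀ : ℝ) (hx₀ : 0 < x₀) (γ₁ γ₂ : ℝ → ℝ)
    (hγ₁ : IsDSSolution s P γ₁ (Set.Ici x₀))
    (hγ₂ : IsDSSolution s P γ₂ (Set.Ici x₀))
    (hlt : γ₂ x₀ < γ₁ x₀) :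
    ∃ C₁ > (0 : ℝ), ∀ x ≥ x₀,
      C₁ * x ^ (1 / s) ≤ γ₁ x - γ₂ x ∧ C₁ * x ^ (1 / s) ≤ γ₁ x := by
  set v : ℝ → ℝ := fun y => (γ₁ y - γ₂ y) / y ^ (1 / s)
  have hv₀ : 0 < v x₀ := div_pos (sub_pos.2 hlt) (rpow_pos_of_pos hx₀ _)
  have hv' : ∀ y ∈ Ici x₀,
      HasDerivWithinAt v (P y / (s * y * γ₁ y * γ₂ y) * v y) (Ici x₀) y :=
    fun y hy => hγ₁.hasDerivWithinAt_sub_div_rpow hγ₂ hy (hx₀.trans_le hy)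
  refine ⟨v x₀, hv₀, fun x hx => ?_⟩
  have hvx : v x₀ ≤ v x := by
    refine le_of_deriv_right_nonneg_of_pos hx
      (fun y hy => (hv' y hy.1).continuousWithinAt.mono Icc_subset_Ici_self)
      (fun y hy => (hv' y hy.1).mono (Ici_subset_Ici.2 hy.1)) hv₀ (fun y hy hvy => ?_)
    have hy₀ : 0 < y := hx₀.trans_le hy.1
    have := hP.2.2 y hy₀
    have := hγ₁.1 y hy.1
    have := hγ₂.1 y hy.1
    exact mul_nonneg (by positivity) hvy.le
  have hgap := (le_div_iff₀ (rpow_pos_of_pos (hx₀.trans_le hx) _)).1 hvx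
  exact ⟨hgap, hgap.trans (by linarith [hγ₂.1 x hx])⟩
end
end

section
/- (Landau pole for non-minimal global solutions.) Let s > 0, let P satisfy H1, and fix x₀ > 0. Let γ be a positive solution of the Dyson–Schwinger ODE on [x₀, ∞), and suppose there exists another positive solution γ̃ on [x₀, ∞) with γ̃(x₀) < γ(x₀). Then ∫_{x₀}^∞ dz / (s·z·γ(z)) < ∞; that is, the scale L* at which the running coupling associated with γ reaches x = ∞ is finite, so γ exhibits a Landau pole. -/
open Real MeasureTheory Filter Set

noncomputable section

/-! The difference `h = γ - γ̃` of two solutions solves the linear equation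
`h' = h (1 + P / (γ γ̃)) / (s x)`; since `P > 0`, a positive `h` grows strictly faster than
`x ^ (1 / s)`, so fencing gives `γ ≥ h ≥ C x ^ (1 / s)` and `1 / (s z γ z)` is dominated by the
integrable `z ^ (-1 - 1 / s)`. -/

theorem div_rpow_mul_rpow_le_of_hasDerivWithinAt {h h' : ℝ → ℝ} {a r : ℝ} (ha : 0 < a)
    (hpos : 0 < h a) (hh : ∀ x ∈ Ici a, HasDerivWithinAt h (h' x) (Ici a) x)
    (hgrowth : ∀ x ∈ Ici a, 0 < h x → r * h x / x < h' x) :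
    ∀ x ∈ Ici a, h a / a ^ r * x ^ r ≤ h x := by
  set L : ℝ → ℝ := fun x => h a / a ^ r * x ^ r
  have hL : ∀ x ∈ Ici a, HasDerivAt L (r * L x / x) x := by
    intro x hx
    have hx0 : x ≠ 0 := (ha.trans_le hx).ne'
    have := (Real.hasDerivAt_rpow_const (p := r) (Or.inl hx0)).const_mul (h a / a ^ r)
    rw [Real.rpow_sub_one hx0] at this
    exact this.congr_deriv (by simp only [L]; ring)
  intro x hx
  refine image_le_of_deriv_right_lt_deriv_boundary' (a := a) (b := x) (f := L) (B := h)
    (fun y hy => (hL y hy.1).continuousAt.continuousWithinAt)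
    (fun y hy => (hL y hy.1).hasDerivWithinAt) ?_
    (fun y hy => (hh y hy.1).continuousWithinAt.mono Icc_subset_Ici_self)
    (fun y hy => (hh y hy.1).mono (Ici_subset_Ici.mpr hy.1)) ?_ ⟨hx, le_rfl⟩
  · simp [L, (Real.rpow_pos_of_pos ha r).ne']
  · intro y hy hLy
    have hLpos : 0 < L y :=
      mul_pos (div_pos hpos (Real.rpow_pos_of_pos ha r)) (Real.rpow_pos_of_pos (ha.trans_le hy.1) r)
    rw [hLy] at hLpos ⊢
    exact hgrowth y hy.1 hLpos

theorem integrableOn_Ici_inv_mul_of_rpow_le {f : ℝ → ℝ} {a k r : ℝ} (ha : 0 < a) (hk : 0 < k)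
    (hr : 0 < r) (hf : ContinuousOn f (Ici a)) (hbound : ∀ z ∈ Ici a, k * z ^ r ≤ f z) :
    IntegrableOn (fun z => (z * f z)⁻¹) (Ici a) := by
  have hmajorant : IntegrableOn (fun z => k⁻¹ * z ^ (-(1 + r))) (Ici a) := by
    rw [integrableOn_Ici_iff_integrableOn_Ioi]
    exact (integrableOn_Ioi_rpow_of_lt (by linarith) ha).const_mul k⁻¹
  have hne : ∀ z ∈ Ici a, z * f z ≠ 0 := fun z hz =>
    (mul_pos (ha.trans_le hz)
      ((mul_pos hk (Real.rpow_pos_of_pos (ha.trans_le hz) r)).trans_le (hbound z hz))).ne'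
  refine hmajorant.mono'
    (((continuousOn_id.mul hf).inv₀ hne).aestronglyMeasurable measurableSet_Ici) ?_
  filter_upwards [ae_restrict_mem measurableSet_Ici] with z hz
  have hz0 : 0 < z := ha.trans_le hz
  have hkz : 0 < k * z ^ r := mul_pos hk (Real.rpow_pos_of_pos hz0 r)
  calc ‖(z * f z)⁻¹‖ = (z * f z)⁻¹ := by
        rw [Real.norm_eq_abs, abs_of_pos (inv_pos.mpr (mul_pos hz0 (hkz.trans_le (hbound z hz))))]
    _ ≤ (z * (k * z ^ r))⁻¹ := by gcongr; exact hbound z hz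
    _ = k⁻¹ * z ^ (-(1 + r)) := by
        rw [Real.rpow_neg hz0.le, Real.rpow_add hz0, Real.rpow_one]
        field_simp

theorem IsDSSolution.hasDerivWithinAt_sub {s : ℝ} {P γ γt : ℝ → ℝ} {I : Set ℝ} {x : ℝ}
    (hγ : IsDSSolution s P γ I) (hγt : IsDSSolution s P γt I) (hx : x ∈ I) (hs : s ≠ 0)
    (hx0 : x ≠ 0) :
    HasDerivWithinAt (fun y => γ y - γt y)
      ((γ x - γt x) * (1 + P x / (γ x * γt x)) / (s * x)) I x := by
  refine ((hγ.2 x hx).sub (hγt.2 x hx)).congr_deriv ?_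
  have := (hγ.1 x hx).ne'
  have := (hγt.1 x hx).ne'
  field_simp
  ring

theorem stmt_16 (s : ℝ) (hs : 0 < s) (P : ℝ → ℝ) (hP : H1 P)
    (x₀ : ℝ) (hx₀ : 0 < x₀) (γ : ℝ → ℝ)
    (hγ : IsDSSolution s P γ (Set.Ici x₀))
    (γt : ℝ → ℝ) (hγt : IsDSSolution s P γt (Set.Ici x₀))
    (hlt : γt x₀ < γ x₀) :
    MeasureTheory.IntegrableOn (fun z => 1 / (s * z * γ z)) (Set.Ici x₀) := by
  have hgrowth : ∀ x ∈ Ici x₀, 0 < γ x - γt x →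
      1 / s * (γ x - γt x) / x < (γ x - γt x) * (1 + P x / (γ x * γt x)) / (s * x) := by
    intro x hx hd
    have hx0 : 0 < x := hx₀.trans_le hx
    have hq : 0 < P x / (γ x * γt x) :=
      div_pos (hP.2.2 x hx0) (mul_pos (hγ.1 x hx) (hγt.1 x hx))
    rw [show 1 / s * (γ x - γt x) / x = (γ x - γt x) * 1 / (s * x) by field_simp]
    exact div_lt_div_of_pos_right (mul_lt_mul_of_pos_left (by linarith) hd) (by positivity)
  have hgap := div_rpow_mul_rpow_le_of_hasDerivWithinAt (h := fun y => γ y - γt y) hx₀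
    (sub_pos.mpr hlt)
    (fun x hx => hγ.hasDerivWithinAt_sub hγt hx hs.ne' (hx₀.trans_le hx).ne') hgrowth
  have hint := integrableOn_Ici_inv_mul_of_rpow_le hx₀
    (div_pos (sub_pos.mpr hlt) (Real.rpow_pos_of_pos hx₀ _)) (one_div_pos.mpr hs)
    (fun x hx => (hγ.2 x hx).continuousWithinAt)
    fun z hz => (hgap z hz).trans (by linarith [hγt.1 z hz])
  refine (IntegrableOn.congr_fun (hint.const_mul s⁻¹) (fun z _ => ?_) measurableSet_Ici)
  simp only [one_div, mul_assoc, mul_inv]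
end
end
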